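/- For every positive integer N, one has S_{3,0}(N) = 3·S_{3,0}(⌊N/4⌋) + ν(N), where ν(N) = 0 if N ≡ 0, 7, 8, 9, 16, 17, 18, 22, 23 (mod 24); ν(N) = (−1)^{σ(N)} if N ≡ 3, 4, 10, 12, 20 (mod 24); ν(N) = (−1)^{σ(N)+1} if N ≡ 1, 2, 5, 6, 11, 19, 21 (mod 24); ν(N) = 2·(−1)^{σ(N)} if N ≡ 15 (mod 24); and ν(N) = 2·(−1)^{σ(N)+1} if N ≡ 13, 14 (mod 24). -/

import Mathlib

/-!
Split `[0, 4q)` into the blocks `4k, 4k+1, 4k+2, 4k+3`. Their signs are `t, -t, -t, t` with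
`t = (-1)^σ(k)`, and `4k + j ≡ k + j (mod 3)`, so a block contributes `2t` to `S_{3,0}` when
`3 ∣ k` and `-t` otherwise: `S_{3,0}(4q) = 3 S_{3,0}(q) - S_{1,0}(q)`. The full sum `S_{1,0}(q)`
vanishes for even `q` and is `-(-1)^σ(q)` for odd `q`; together with the at most three
terms in `[4q, 4q + r)` this depends only on `(-1)^σ(q)` and `N mod 24`, and matches `ν(N)`
case by case.
-/

/-- binary digit sum -/
def sigma2 (n : ℕ) : ℕ := (Nat.digits 2 n).sum

/-- `S m l x = Σ_{0 ≤ n < x, n ≡ l (mod m)} (−1)^{σ(n)}` -/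
def S (m l x : ℕ) : ℤ :=
  ∑ n ∈ (Finset.range x).filter (fun n => n % m = l), (-1 : ℤ) ^ sigma2 n

/-- `Sint m l x y = S_{m,l}([x,y)) = S_{m,l}(y) − S_{m,l}(x)` -/
def Sint (m l x y : ℕ) : ℤ := S m l y - S m l x
/-- the correction term ν(N) of the fast computing algorithm -/
def nu (N : ℕ) : ℤ :=
  if N % 24 ∈ ({0, 7, 8, 9, 16, 17, 18, 22, 23} : Finset ℕ) then 0
  else if N % 24 ∈ ({3, 4, 10, 12, 20} : Finset ℕ) then (-1) ^ sigma2 N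
  else if N % 24 ∈ ({1, 2, 5, 6, 11, 19, 21} : Finset ℕ) then (-1) ^ (sigma2 N + 1)
  else if N % 24 = 15 then 2 * (-1) ^ sigma2 N
  else 2 * (-1) ^ (sigma2 N + 1)

lemma sigma2_two_mul (n : ℕ) : sigma2 (2 * n) = sigma2 n := by
  rcases Nat.eq_zero_or_pos n with rfl | hn
  · rfl
  · rw [sigma2, Nat.digits_def' one_lt_two (by positivity), Nat.mul_mod_right,
      Nat.mul_div_cancel_left n two_pos, List.sum_cons, zero_add, sigma2]

lemma sigma2_two_mul_add_one (n : ℕ) : sigma2 (2 * n + 1) = sigma2 n + 1 := by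
  rw [sigma2, Nat.digits_def' one_lt_two (by positivity), show (2 * n + 1) % 2 = 1 by omega,
    show (2 * n + 1) / 2 = n by omega, List.sum_cons, sigma2, add_comm]

lemma sigma2_four_mul_add (q : ℕ) {r : ℕ} (hr : r < 4) :
    sigma2 (4 * q + r) = sigma2 q + sigma2 r := by
  have h4 : 4 * q = 2 * (2 * q) := by ring
  interval_cases r
  · rw [h4, add_zero, sigma2_two_mul, sigma2_two_mul]; rfl
  · rw [h4, sigma2_two_mul_add_one, sigma2_two_mul]; rfl
  · rw [show 4 * q + 2 = 2 * (2 * q + 1) by ring, sigma2_two_mul, sigma2_two_mul_add_one]; rfl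
  · rw [show 4 * q + 3 = 2 * (2 * q + 1) + 1 by ring, sigma2_two_mul_add_one,
      sigma2_two_mul_add_one]; rfl

lemma S_add (m l x r : ℕ) :
    S m l (x + r) = S m l x +
      ∑ j ∈ Finset.range r, if (x + j) % m = l then (-1 : ℤ) ^ sigma2 (x + j) else 0 := by
  simp only [S, Finset.sum_filter, Finset.sum_range_add]

lemma neg_one_pow_sigma2_four_mul_add (q : ℕ) {r : ℕ} (hr : r < 4) :
    (-1 : ℤ) ^ sigma2 (4 * q + r) = (-1) ^ sigma2 q * (-1) ^ sigma2 r := by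
  rw [sigma2_four_mul_add q hr, pow_add]

lemma S_four_mul (q : ℕ) : S 3 0 (4 * q) = 3 * S 3 0 q - S 1 0 q := by
  induction q with
  | zero => rfl
  | succ q ih =>
    rw [show 4 * (q + 1) = 4 * q + 4 by ring, S_add, S_add 3 0 q 1, S_add 1 0 q 1, ih]
    have h4 : ∀ j, (4 * q + j) % 3 = (q + j) % 3 := fun j => by omega
    have hσ : sigma2 0 = 0 ∧ sigma2 1 = 1 ∧ sigma2 2 = 1 ∧ sigma2 3 = 2 := by decide
    simp (disch := decide) only [Finset.sum_range_succ, Finset.sum_range_zero, zero_add,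
      Nat.mod_one, h4, neg_one_pow_sigma2_four_mul_add, hσ, if_true]
    have : q % 3 = 0 ∨ q % 3 = 1 ∨ q % 3 = 2 := by omega
    rcases this with h | h | h <;> simp [Nat.add_mod q, h] <;> ring

lemma S_one_zero_two_mul (m : ℕ) : S 1 0 (2 * m) = 0 := by
  induction m with
  | zero => rfl
  | succ m ih =>
    rw [show 2 * (m + 1) = 2 * m + 2 by ring, S_add, ih]
    simp [Finset.sum_range_succ, Nat.mod_one, sigma2_two_mul_add_one, sigma2_two_mul, pow_succ]

lemma S_one_zero (q : ℕ) : S 1 0 q = if q % 2 = 0 then 0 else -(-1) ^ sigma2 q := by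
  obtain ⟨m, rfl | rfl⟩ := Nat.even_or_odd' q
  · simp [S_one_zero_two_mul]
  · rw [S_add, S_one_zero_two_mul]
    simp [Nat.mod_one, sigma2_two_mul_add_one, sigma2_two_mul, Nat.add_mod, pow_succ]

lemma nu_four_mul_add (q : ℕ) {r : ℕ} (hr : r < 4) :
    nu (4 * q + r) = -S 1 0 q + ∑ j ∈ Finset.range r,
      if (4 * q + j) % 3 = 0 then (-1 : ℤ) ^ sigma2 (4 * q + j) else 0 := by
  have h24 : (4 * q + r) % 24 = 4 * (q % 6) + r := by omega
  have h2 : q % 2 = q % 6 % 2 := by omega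
  have h3 : ∀ j, (4 * q + j) % 3 = (q % 6 + j) % 3 := fun j => by omega
  have hσ : sigma2 0 = 0 ∧ sigma2 1 = 1 ∧ sigma2 2 = 1 ∧ sigma2 3 = 2 := by decide
  have hb : q % 6 < 6 := Nat.mod_lt q (by norm_num)
  have h4q : sigma2 (4 * q) = sigma2 q := by simpa [hσ] using sigma2_four_mul_add q four_pos
  rw [nu, S_one_zero, h24, h2, sigma2_four_mul_add q hr]
  simp only [h3]
  generalize q % 6 = b at *
  interval_cases r <;> interval_cases b <;>
    simp (disch := decide) [Finset.sum_range_succ, neg_one_pow_sigma2_four_mul_add, h4q, hσ,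
      pow_succ] <;>
    ring

theorem stmt_19_general (N : ℕ) :
    S 3 0 N = 3 * S 3 0 (N / 4) + nu N := by
  obtain ⟨q, r, hr, rfl⟩ : ∃ q r, r < 4 ∧ N = 4 * q + r :=
    ⟨N / 4, N % 4, Nat.mod_lt N four_pos, (Nat.div_add_mod N 4).symm⟩
  rw [S_add, S_four_mul, nu_four_mul_add q hr, show (4 * q + r) / 4 = q by omega]
  ring

theorem stmt_19 (N : ℕ) (hN : 0 < N) :
    S 3 0 N = 3 * S 3 0 (N / 4) + nu N :=
  stmt_19_general N
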